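/- Suppose b divides a. Let P and Q be natural numbers such that P² - (a² + 4b)·Q² = -4b. Then there exists a natural number n such that b^n·P = L_{2n+1} and b^n·Q = F_{2n+1}. -/
import Mathlib


/-- The integer sequence `F_i`: `F_0 = 0`, `F_1 = 1`, `F_{i+2} = a·F_{i+1} + b·F_i`. -/
def intF (a b : ℤ) : ℕ → ℤ
  | 0 => 0
  | 1 => 1
  | n + 2 => a * intF a b (n + 1) + b * intF a b n

/-- The integer sequence `L_i`: `L_0 = 2`, `L_1 = a`, `L_{i+2} = a·L_{i+1} + b·L_i`. -/
def intL (a b : ℤ) : ℕ → ℤ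
  | 0 => 2
  | 1 => a
  | n + 2 => a * intL a b (n + 1) + b * intL a b n

lemma LF_step (a b : ℤ) (k : ℕ) :
    2 * intL a b (k+1) = a * intL a b k + (a^2+4*b) * intF a b k ∧
    2 * intF a b (k+1) = intL a b k + a * intF a b k := by
  induction k with
  | zero =>
    refine ⟨?_, ?_⟩ <;> simp [intL, intF] <;> ring
  | succ k ih =>
    obtain ⟨h1, h2⟩ := ih
    have hL2 : intL a b (k+2) = a * intL a b (k+1) + b * intL a b k := rfl
    have hF2 : intF a b (k+2) = a * intF a b (k+1) + b * intF a b k := rfl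
    constructor
    · refine mul_left_cancel₀ (by norm_num : (2:ℤ) ≠ 0) ?_
      rw [hL2]
      linear_combination a*h1 - (a^2+4*b)*h2
    · refine mul_left_cancel₀ (by norm_num : (2:ℤ) ≠ 0) ?_
      rw [hF2]
      linear_combination a*h2 - h1

lemma LF_step2 (a b : ℤ) (k : ℕ) :
    2 * intL a b (k+2) = (a^2+2*b) * intL a b k + a*(a^2+4*b) * intF a b k ∧
    2 * intF a b (k+2) = a * intL a b k + (a^2+2*b) * intF a b k := by
  obtain ⟨h1, h2⟩ := LF_step a b k
  obtain ⟨h3, h4⟩ := LF_step a b (k+1)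
  constructor
  · refine mul_left_cancel₀ (by norm_num : (2:ℤ) ≠ 0) ?_
    linear_combination 2*h3 + a*h1 + (a^2+4*b)*h2
  · refine mul_left_cancel₀ (by norm_num : (2:ℤ) ≠ 0) ?_
    linear_combination 2*h4 + h1 + a*h2

set_option maxHeartbeats 1000000 in
theorem pell_like_integer_solutions
    (a b : ℤ) (ha : 0 < a) (hb : 0 < b) (hba : b ∣ a) (P Q : ℕ)
    (heq : (P : ℤ) ^ 2 - (a ^ 2 + 4 * b) * (Q : ℤ) ^ 2 = -4 * b) :
    ∃ n : ℕ, b ^ n * (P : ℤ) = intL a b (2 * n + 1) ∧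
      b ^ n * (Q : ℤ) = intF a b (2 * n + 1) := by
  obtain ⟨c, hc⟩ := hba
  have hc0 : 0 < c := by
    by_contra h
    push_neg at h
    nlinarith [mul_nonpos_of_nonneg_of_nonpos hb.le h]
  have key : ∀ q : ℕ, ∀ p : ℤ, 0 ≤ p →
      p ^ 2 - (a ^ 2 + 4 * b) * (q : ℤ) ^ 2 = -4 * b →
      ∃ n : ℕ, b ^ n * p = intL a b (2 * n + 1) ∧
        b ^ n * (q : ℤ) = intF a b (2 * n + 1) := by
    intro q
    induction q using Nat.strong_induction_on with
    | _ q ih =>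
    intro p hp heq
    rcases Nat.lt_or_ge q 2 with hq | hq
    · interval_cases q
      · exfalso
        norm_num at heq
        nlinarith [sq_nonneg p]
      · have hpa : p = a := by
          have h1 : (p - a) * (p + a) = 0 := by
            push_cast at heq
            linear_combination heq
          rcases mul_eq_zero.mp h1 with h | h
          · linarith
          · linarith
        exact ⟨0, by simp [intL, hpa], by simp [intF]⟩
    · have hq2 : (2:ℤ) ≤ (q:ℤ) := by exact_mod_cast hq
      have hpgt : a * (q:ℤ) < p := by
        by_contra h
        push_neg at h
        nlinarith [mul_self_le_mul_self hp h,
          mul_le_mul hq2 hq2 (by norm_num) (by linarith)]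
      have hev : ∃ m : ℤ, p - a * (q:ℤ) = 2 * m := by
        have h2 : Even ((p - a*(q:ℤ)) * (p + a*(q:ℤ))) := by
          have h3 : (p - a*(q:ℤ)) * (p + a*(q:ℤ)) = 2 * (2*b*((q:ℤ)^2-1)) := by
            linear_combination heq
          rw [h3]; exact even_two_mul _
        rcases Int.even_mul.mp h2 with h | h
        · obtain ⟨k, hk⟩ := h; exact ⟨k, by linarith⟩
        · obtain ⟨k, hk⟩ := h; exact ⟨p - k, by linarith⟩
      obtain ⟨m, hm⟩ := hev
      have hm0 : 0 < m := by linarith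
      have hm1 : 1 ≤ m := hm0
      have hcen : 4*m^2 + 4*a*m*(q:ℤ) - 4*b*(q:ℤ)^2 + 4*b = 0 := by
        linear_combination heq - (2*m + a*(q:ℤ) + p) * hm
      have heq' : (2*m - a*((q:ℤ) - c*m))^2 - (a^2+4*b)*((q:ℤ) - c*m)^2 = -4*b := by
        linear_combination hcen + (4*c*m^2 - 8*m*(q:ℤ)) * hc
      have hasc1 : 2*b*p = (a^2+2*b)*(2*m - a*((q:ℤ) - c*m)) + a*(a^2+4*b)*((q:ℤ) - c*m) := by
        linear_combination 2*b*hm + (-2*a*m)*hc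
      have hasc2 : 2*b*(q:ℤ) = a*(2*m - a*((q:ℤ) - c*m)) + (a^2+2*b)*((q:ℤ) - c*m) := by
        linear_combination (-2*m)*hc
      have hcm1 : 1 ≤ c*m := mul_pos hc0 hm0
      have hQpos : 1 ≤ (q:ℤ) - c*m := by
        by_contra hcon
        push_neg at hcon
        have h0 : (q:ℤ) - c*m ≤ 0 := by
          have := Int.lt_add_one_iff.mp (by linarith : (q:ℤ) - c*m < 0 + 1)
          linarith
        have hY : (a^2+2*b)*((q:ℤ)-c*m) ≤ 0 :=
          mul_nonpos_of_nonneg_of_nonpos (by positivity) h0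
        have hXY : 0 < a*(2*m - a*((q:ℤ) - c*m)) + (a^2+2*b)*((q:ℤ) - c*m) := by
          rw [← hasc2]
          nlinarith
        have hsq : (a*(2*m - a*((q:ℤ) - c*m)) + (a^2+2*b)*((q:ℤ) - c*m)) *
            (a*(2*m - a*((q:ℤ) - c*m)) - (a^2+2*b)*((q:ℤ) - c*m)) < 0 := by
          have hval : (a*(2*m - a*((q:ℤ) - c*m)) + (a^2+2*b)*((q:ℤ) - c*m)) *
              (a*(2*m - a*((q:ℤ) - c*m)) - (a^2+2*b)*((q:ℤ) - c*m)) =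
              -4*b^2*((q:ℤ)-c*m)^2 - 4*a^2*b := by
            linear_combination a^2 * heq'
          rw [hval]
          nlinarith [mul_nonneg (mul_nonneg hb.le hb.le) (sq_nonneg ((q:ℤ)-c*m)),
            mul_pos (mul_pos ha ha) hb]
        have hXmY : a*(2*m - a*((q:ℤ) - c*m)) - (a^2+2*b)*((q:ℤ) - c*m) < 0 := by
          by_contra h'
          push_neg at h'
          linarith [mul_nonneg hXY.le h']
        linarith
      have hP'pos : 0 ≤ 2*m - a*((q:ℤ) - c*m) := by
        rcases eq_or_lt_of_le hQpos with hQ1 | hQ1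
        · by_contra hcon
          push_neg at hcon
          rw [← hQ1] at heq' hasc2 hcon
          have hPa : 2*m - a*1 = -a := by
            have h1 : ((2*m - a*1) - a) * ((2*m - a*1) + a) = 0 := by
              linear_combination heq'
            rcases mul_eq_zero.mp h1 with h | h
            · linarith
            · linarith
          rw [hPa] at hasc2
          nlinarith
        · have hQ2' : 2 ≤ (q:ℤ) - c*m := hQ1
          by_contra hcon
          push_neg at hcon
          have h1 : 0 < a*((q:ℤ)-c*m) - (2*m - a*((q:ℤ) - c*m)) := by
            nlinarith [mul_pos ha (by linarith : (0:ℤ) < (q:ℤ)-c*m)]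
          have h2 : 0 < a*((q:ℤ)-c*m) + (2*m - a*((q:ℤ) - c*m)) := by linarith
          nlinarith [mul_pos h1 h2, heq', hb,
            mul_nonneg hb.le (mul_nonneg
              (by linarith : (0:ℤ) ≤ (q:ℤ)-c*m-2) (by linarith : (0:ℤ) ≤ (q:ℤ)-c*m+2))]
      obtain ⟨q'', hcast⟩ : ∃ q'' : ℕ, ((q'':ℕ):ℤ) = (q:ℤ) - c*m :=
        ⟨_, Int.toNat_of_nonneg (by linarith)⟩
      have hlt : q'' < q := by
        have h1 : ((q'':ℕ):ℤ) < (q:ℤ) := by rw [hcast]; linarith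
        exact_mod_cast h1
      rw [← hcast] at heq' hasc1 hasc2 hP'pos
      obtain ⟨n, hL, hF⟩ := ih q'' hlt _ hP'pos heq'
      obtain ⟨h2L, h2F⟩ := LF_step2 a b (2*n+1)
      have hidx : 2*(n+1)+1 = (2*n+1)+2 := by ring
      refine ⟨n+1, ?_, ?_⟩
      · rw [hidx]
        refine mul_left_cancel₀ (by norm_num : (2:ℤ) ≠ 0) ?_
        linear_combination b^n * hasc1 + (a^2+2*b)*hL + a*(a^2+4*b)*hF - h2L
      · rw [hidx]
        refine mul_left_cancel₀ (by norm_num : (2:ℤ) ≠ 0) ?_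
        linear_combination b^n * hasc2 + a*hL + (a^2+2*b)*hF - h2F
  exact key Q P (Int.natCast_nonneg P) heq
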